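/- arXiv:0711.1901 — 2 statements merged into one kernel-verified Lean document; each statement's English description precedes it below -/
import Mathlib

section
/- A nonzero real binary quartic Q has a repeated linear factor over ℂ (i.e., some nonzero complex linear form divides Q, viewed as a complex quartic, with multiplicity at least 2) if and only if Δ(Q) = 0, where Δ(Q) := 4I(Q)³ − J(Q)². -/
/-!
Dehomogenizing at `Y = 1`, the square of a linear form `pX + qY` with `p ≠ 0` divides `Q` exactly
when the polynomial `Q(t, 1)` has a double root, while `Y²` divides `Q` exactly when `a = b = 0`.
On the invariant side, if `a ≠ 0` and `r₁, …, r₄` are the roots of `Q(t, 1)` then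
`4I³ - J² = 27 a⁶ ∏ (rᵢ - rⱼ)²`; if `a = 0` then `4I³ - J² = 27 b² · disc(bt³ + ct² + dt + e)`,
which vanishes identically when moreover `b = 0`.
-/

section

open MvPolynomial

/-- The real binary quartic `aX⁴ + bX³Y + cX²Y² + dXY³ + eY⁴`. -/
noncomputable def binQuartic (a b c d e : ℝ) : MvPolynomial (Fin 2) ℝ :=
  C a * X 0 ^ 4 + C b * X 0 ^ 3 * X 1 + C c * X 0 ^ 2 * X 1 ^ 2 +
    C d * X 0 * X 1 ^ 3 + C e * X 1 ^ 4

/-- The real binary quartic viewed as a complex binary quartic. -/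
noncomputable def binQuarticC (a b c d e : ℝ) : MvPolynomial (Fin 2) ℂ :=
  C (a : ℂ) * X 0 ^ 4 + C (b : ℂ) * X 0 ^ 3 * X 1 + C (c : ℂ) * X 0 ^ 2 * X 1 ^ 2 +
    C (d : ℂ) * X 0 * X 1 ^ 3 + C (e : ℂ) * X 1 ^ 4

/-- The fundamental invariant `I = 12ae − 3bd + c²` of a real binary quartic. -/
def Iinv (a b c d e : ℝ) : ℝ := 12 * a * e - 3 * b * d + c ^ 2

/-- The fundamental invariant `J = 72aec − 27ad² − 27b²e + 9bcd − 2c³`. -/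
def Jinv (a b c d e : ℝ) : ℝ :=
  72 * a * e * c - 27 * a * d ^ 2 - 27 * b ^ 2 * e + 9 * b * c * d - 2 * c ^ 3

end

variable {R K : Type*}

section Univariate

open Polynomial

theorem Polynomial.exists_sq_X_sub_C_dvd_iff_not_nodup_roots [CommRing R] [IsDomain R]
    {f : R[X]} (hf : f ≠ 0) : (∃ r, (X - C r) ^ 2 ∣ f) ↔ ¬ f.roots.Nodup := by
  classical
  simp only [Multiset.nodup_iff_count_le_one, count_roots, not_forall, not_le,
    ← le_rootMultiplicity_iff hf]
  rfl

noncomputable def quarticPoly [Semiring R] (a b c d e : R) : R[X] :=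
  C a * X ^ 4 + C b * X ^ 3 + C c * X ^ 2 + C d * X + C e

theorem quarticPoly_inj [Semiring R] {a b c d e a' b' c' d' e' : R} :
    quarticPoly a b c d e = quarticPoly a' b' c' d' e' ↔
      a = a' ∧ b = b' ∧ c = c' ∧ d = d' ∧ e = e' := by
  refine ⟨fun h => ?_, by rintro ⟨rfl, rfl, rfl, rfl, rfl⟩; rfl⟩
  have h := fun n => congrArg (coeff · n) h
  simp only [quarticPoly, coeff_add, coeff_C_mul, coeff_X_pow, coeff_X, coeff_C] at h
  exact ⟨by simpa using h 4, by simpa using h 3, by simpa using h 2, by simpa using h 1,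
    by simpa using h 0⟩

theorem quarticPoly_eq_zero_iff [Semiring R] {a b c d e : R} :
    quarticPoly a b c d e = 0 ↔ a = 0 ∧ b = 0 ∧ c = 0 ∧ d = 0 ∧ e = 0 := by
  rw [← quarticPoly_inj]; simp [quarticPoly]

theorem natDegree_quarticPoly_le [Semiring R] (a b c d e : R) :
    (quarticPoly a b c d e).natDegree ≤ 4 := by
  unfold quarticPoly; compute_degree

theorem C_mul_prod_X_sub_C_eq_quarticPoly [CommRing R] (a r₁ r₂ r₃ r₄ : R) :
    C a * ((X - C r₁) * (X - C r₂) * (X - C r₃) * (X - C r₄)) =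
      quarticPoly a (-(a * (r₁ + r₂ + r₃ + r₄)))
        (a * (r₁ * r₂ + r₁ * r₃ + r₁ * r₄ + r₂ * r₃ + r₂ * r₄ + r₃ * r₄))
        (-(a * (r₁ * r₂ * r₃ + r₁ * r₂ * r₄ + r₁ * r₃ * r₄ + r₂ * r₃ * r₄)))
        (a * (r₁ * r₂ * r₃ * r₄)) := by
  simp only [quarticPoly, map_neg, map_mul, map_add]; ring

theorem exists_roots_quarticPoly_eq [Field K] [IsAlgClosed K] {a : K} (ha : a ≠ 0) (b c d e : K) :
    ∃ r₁ r₂ r₃ r₄, (quarticPoly a b c d e).roots = {r₁, r₂, r₃, r₄} ∧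
      C a * ((X - C r₁) * (X - C r₂) * (X - C r₃) * (X - C r₄)) = quarticPoly a b c d e := by
  set f := quarticPoly a b c d e
  have hsplit : f.Splits := IsAlgClosed.splits f
  have hdeg : f.natDegree = 4 := by unfold f quarticPoly; compute_degree!
  have hlead : f.leadingCoeff = a := by
    rw [leadingCoeff, hdeg]; simp [f, quarticPoly]
  obtain ⟨r₁, r₂, r₃, r₄, hroots⟩ :=
    Multiset.card_eq_four.mp (hdeg ▸ hsplit.natDegree_eq_card_roots.symm)
  refine ⟨r₁, r₂, r₃, r₄, hroots, ?_⟩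
  conv_rhs => rw [hsplit.eq_prod_roots, hlead, hroots]
  simp [mul_assoc]

/-- The discriminant `4 I³ - J²`. -/
def quarticDisc [CommRing R] (a b c d e : R) : R :=
  4 * (12 * a * e - 3 * b * d + c ^ 2) ^ 3 -
    (72 * a * e * c - 27 * a * d ^ 2 - 27 * b ^ 2 * e + 9 * b * c * d - 2 * c ^ 3) ^ 2

theorem quarticDisc_vieta [CommRing R] (a r₁ r₂ r₃ r₄ : R) :
    quarticDisc a (-(a * (r₁ + r₂ + r₃ + r₄)))
      (a * (r₁ * r₂ + r₁ * r₃ + r₁ * r₄ + r₂ * r₃ + r₂ * r₄ + r₃ * r₄))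
      (-(a * (r₁ * r₂ * r₃ + r₁ * r₂ * r₄ + r₁ * r₃ * r₄ + r₂ * r₃ * r₄)))
      (a * (r₁ * r₂ * r₃ * r₄)) =
    27 * a ^ 6 * ((r₁ - r₂) * (r₁ - r₃) * (r₁ - r₄) * (r₂ - r₃) * (r₂ - r₄) * (r₃ - r₄)) ^ 2 := by
  unfold quarticDisc; ring

theorem quarticDisc_zero_left [CommRing R] (b c d e : R) :
    quarticDisc 0 b c d e = 27 * b ^ 2 * (⟨b, c, d, e⟩ : Cubic R).discr := by
  unfold quarticDisc Cubic.discr; ring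

variable [Field K] [CharZero K] [IsAlgClosed K] {a b c d e : K}

theorem quarticDisc_eq_zero_iff_of_ne_zero (ha : a ≠ 0) :
    quarticDisc a b c d e = 0 ↔ ¬ (quarticPoly a b c d e).roots.Nodup := by
  obtain ⟨r₁, r₂, r₃, r₄, hroots, hf⟩ := exists_roots_quarticPoly_eq ha b c d e
  rw [C_mul_prod_X_sub_C_eq_quarticPoly, quarticPoly_inj] at hf
  obtain ⟨-, rfl, rfl, rfl, rfl⟩ := hf
  have h27 : (27 : K) * a ^ 6 ≠ 0 := mul_ne_zero (by norm_num) (pow_ne_zero 6 ha)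
  rw [quarticDisc_vieta, mul_eq_zero, or_iff_right h27, pow_eq_zero_iff two_ne_zero, hroots]
  simp only [mul_eq_zero, sub_eq_zero, Multiset.insert_eq_cons, Multiset.nodup_cons,
    Multiset.mem_cons, Multiset.mem_singleton, Multiset.nodup_singleton]
  tauto

theorem quarticDisc_zero_left_eq_zero_iff (hb : b ≠ 0) :
    quarticDisc 0 b c d e = 0 ↔ ¬ (quarticPoly 0 b c d e).roots.Nodup := by
  have hP : quarticPoly 0 b c d e = (⟨b, c, d, e⟩ : Cubic K).toPoly := by
    simp [quarticPoly, Cubic.toPoly]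
  have := Cubic.discr_ne_zero_iff_roots_nodup (φ := RingHom.id K) (P := ⟨b, c, d, e⟩) hb
    (by simpa using IsAlgClosed.splits _)
  have h27 : (27 : K) * b ^ 2 ≠ 0 := mul_ne_zero (by norm_num) (pow_ne_zero 2 hb)
  rw [quarticDisc_zero_left, mul_eq_zero, or_iff_right h27, hP]
  exact (not_iff_comm.mp this).symm

theorem quarticDisc_eq_zero_iff :
    quarticDisc a b c d e = 0 ↔
      (∃ r, (X - C r) ^ 2 ∣ quarticPoly a b c d e) ∨ a = 0 ∧ b = 0 := by
  by_cases hab : a = 0 ∧ b = 0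
  · obtain ⟨rfl, rfl⟩ := hab
    simp only [and_self, or_true, iff_true, quarticDisc]
    ring
  have hf : quarticPoly a b c d e ≠ 0 := fun h =>
    hab ((quarticPoly_eq_zero_iff.mp h).imp_right And.left)
  rw [or_iff_left hab, exists_sq_X_sub_C_dvd_iff_not_nodup_roots hf]
  by_cases ha : a = 0
  · subst ha
    exact quarticDisc_zero_left_eq_zero_iff fun hb => hab ⟨rfl, hb⟩
  · exact quarticDisc_eq_zero_iff_of_ne_zero ha

end Univariate

open MvPolynomial

section Homogeneous

noncomputable def quarticForm [CommSemiring R] (a b c d e : R) : MvPolynomial (Fin 2) R :=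
  C a * X 0 ^ 4 + C b * X 0 ^ 3 * X 1 + C c * X 0 ^ 2 * X 1 ^ 2 + C d * X 0 * X 1 ^ 3 +
    C e * X 1 ^ 4

variable [CommRing R] {a b c d e : R}

theorem aeval_X_one_quarticForm :
    aeval ![(Polynomial.X : Polynomial R), 1] (quarticForm a b c d e) = quarticPoly a b c d e := by
  simp [quarticForm, quarticPoly, Polynomial.algebraMap_eq]

theorem aeval_one_X_quarticForm :
    aeval ![1, (Polynomial.X : Polynomial R)] (quarticForm a b c d e) = quarticPoly e d c b a := by
  simp only [quarticForm, map_add, map_mul, algHom_C, Polynomial.algebraMap_eq, map_pow, aeval_X,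
    Matrix.cons_val_zero, Matrix.cons_val_one, Matrix.cons_val_fin_one, one_pow, mul_one,
    quarticPoly]
  ring

theorem X_one_sq_dvd_quarticForm_iff :
    X 1 ^ 2 ∣ quarticForm a b c d e ↔ a = 0 ∧ b = 0 := by
  refine ⟨fun h => ?_, ?_⟩
  · have h := map_dvd (aeval ![1, (Polynomial.X : Polynomial R)]) h
    rw [map_pow, aeval_X, aeval_one_X_quarticForm, Matrix.cons_val_one, Matrix.cons_val_zero,
      Polynomial.X_pow_dvd_iff] at h
    simpa [quarticPoly] using And.intro (h 0 two_pos) (h 1 one_lt_two)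
  · rintro ⟨rfl, rfl⟩
    exact ⟨C c * X 0 ^ 2 + C d * X 0 * X 1 + C e * X 1 ^ 2, by
      simp only [quarticForm, map_zero]; ring⟩

theorem sq_dvd_quarticForm_of_sq_dvd_quarticPoly [IsDomain R] {r : R}
    (h : (Polynomial.X - Polynomial.C r) ^ 2 ∣ quarticPoly a b c d e) :
    (X 0 - C r * X 1) ^ 2 ∣ quarticForm a b c d e := by
  obtain ⟨g, hg⟩ := h
  have hdeg : g.natDegree < 3 := by
    rcases eq_or_ne g 0 with rfl | hg0
    · simp
    have := natDegree_quarticPoly_le a b c d e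
    rw [hg, Polynomial.natDegree_mul (pow_ne_zero _ (Polynomial.X_sub_C_ne_zero r)) hg0,
      Polynomial.natDegree_pow, Polynomial.natDegree_X_sub_C] at this
    omega
  -- the quadratic cofactor `g` homogenizes to the cofactor of `(X₀ - r X₁)²`
  rw [Polynomial.as_sum_range' g 3 hdeg] at hg
  set g₀ := g.coeff 0
  set g₁ := g.coeff 1
  set g₂ := g.coeff 2
  have hcoeffs : quarticPoly a b c d e =
      quarticPoly g₂ (g₁ - 2 * r * g₂) (g₀ - 2 * r * g₁ + r ^ 2 * g₂) (r ^ 2 * g₁ - 2 * r * g₀)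
        (r ^ 2 * g₀) := by
    rw [hg]
    simp only [Finset.sum_range_succ, Finset.sum_range_zero, ← Polynomial.C_mul_X_pow_eq_monomial,
      quarticPoly, map_add, map_sub, map_mul, map_pow, map_ofNat]
    ring
  obtain ⟨rfl, rfl, rfl, rfl, rfl⟩ := quarticPoly_inj.mp hcoeffs
  exact ⟨C g₂ * X 0 ^ 2 + C g₁ * X 0 * X 1 + C g₀ * X 1 ^ 2, by
    simp only [quarticForm, map_add, map_sub, map_mul, map_pow, map_ofNat]; ring⟩

theorem sq_X_sub_C_dvd_quarticPoly_of_sq_dvd_quarticForm [Field K] {a b c d e p q : K}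
    (hp : p ≠ 0) (h : (C p * X 0 + C q * X 1) ^ 2 ∣ quarticForm a b c d e) :
    (Polynomial.X - Polynomial.C (-q / p)) ^ 2 ∣ quarticPoly a b c d e := by
  have hlin : Polynomial.C p * Polynomial.X + Polynomial.C q =
      Polynomial.C p * (Polynomial.X - Polynomial.C (-q / p)) := by
    rw [mul_sub, ← Polynomial.C_mul, mul_div_cancel₀ _ hp, map_neg, sub_neg_eq_add]
  have h := map_dvd (aeval ![(Polynomial.X : Polynomial K), 1]) h
  simp only [map_pow, map_add, map_mul, algHom_C, Polynomial.algebraMap_eq, aeval_X,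
    Matrix.cons_val_zero, Matrix.cons_val_one, Matrix.cons_val_fin_one, mul_one] at h
  rwa [aeval_X_one_quarticForm, hlin, mul_pow,
    ((Polynomial.isUnit_C.mpr hp.isUnit).pow 2).mul_left_dvd] at h

theorem exists_sq_dvd_quarticForm_iff [Field K] {a b c d e : K} :
    (∃ p q : K, ¬(p = 0 ∧ q = 0) ∧ (C p * X 0 + C q * X 1) ^ 2 ∣ quarticForm a b c d e) ↔
      (∃ r, (Polynomial.X - Polynomial.C r) ^ 2 ∣ quarticPoly a b c d e) ∨ a = 0 ∧ b = 0 := by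
  constructor
  · rintro ⟨p, q, hpq, h⟩
    rcases eq_or_ne p 0 with rfl | hp
    · have hq : q ≠ 0 := fun hq => hpq ⟨rfl, hq⟩
      have hsq : (C 0 * X 0 + C q * X 1 : MvPolynomial (Fin 2) K) ^ 2 = C (q ^ 2) * X 1 ^ 2 := by
        simp only [map_zero, zero_mul, zero_add, map_pow]
        ring
      rw [hsq, ((isUnit_iff_ne_zero.mpr (pow_ne_zero 2 hq)).map C).mul_left_dvd] at h
      exact Or.inr (X_one_sq_dvd_quarticForm_iff.mp h)
    · exact Or.inl ⟨_, sq_X_sub_C_dvd_quarticPoly_of_sq_dvd_quarticForm hp h⟩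
  · rintro (⟨r, hr⟩ | hab)
    · refine ⟨1, -r, by simp, ?_⟩
      simpa [sub_eq_add_neg] using sq_dvd_quarticForm_of_sq_dvd_quarticPoly hr
    · exact ⟨0, 1, by simp, by simpa using X_one_sq_dvd_quarticForm_iff.mpr hab⟩

end Homogeneous

theorem repeated_factor_iff_discriminant_zero_general
    (a b c d e : ℝ) :
    (∃ p q : ℂ, ¬(p = 0 ∧ q = 0) ∧
      (C p * X 0 + C q * X 1) ^ 2 ∣ binQuarticC a b c d e) ↔
    4 * Iinv a b c d e ^ 3 - Jinv a b c d e ^ 2 = 0 := by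
  have hΔ : ((4 * Iinv a b c d e ^ 3 - Jinv a b c d e ^ 2 : ℝ) : ℂ) =
      quarticDisc (a : ℂ) b c d e := by
    simp only [Iinv, Jinv, quarticDisc]
    push_cast
    ring
  rw [← Complex.ofReal_eq_zero, hΔ, quarticDisc_eq_zero_iff]
  exact exists_sq_dvd_quarticForm_iff

/-- A nonzero real binary quartic has a repeated linear factor over `ℂ` if and
only if `Δ = 4I³ − J²` vanishes. -/
theorem repeated_factor_iff_discriminant_zero
    (a b c d e : ℝ) (hQ : binQuartic a b c d e ≠ 0) :
    (∃ p q : ℂ, ¬(p = 0 ∧ q = 0) ∧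
      (C p * X 0 + C q * X 1) ^ 2 ∣ binQuarticC a b c d e) ↔
    4 * Iinv a b c d e ^ 3 - Jinv a b c d e ^ 2 = 0 :=
  repeated_factor_iff_discriminant_zero_general a b c d e
end

section
/- For a nonzero real binary quartic Q, the following are equivalent: (i) I(Q) = 0, J(Q) = 0, and the Hessian covariant H_Q is not identically zero; (ii) Q = c·ℓ³·m for some real number c ≠ 0 and non-proportional nonzero real linear forms ℓ and m, i.e., Q has one triple real root and one distinct simple real root. -/
/-!
`I` and `J` are invariant under the shear `X ↦ X + tY`. For `a ≠ 0` the shear with `t = -b/(4a)`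
kills the `X³Y` coefficient, and for such a depressed quartic `I = J = 0` forces
`c = -6aρ²`, `d = 8aρ³`, `e = -3aρ⁴`, i.e. `Q = a(X - ρY)³(X + 3ρY)`; for `a = 0` the factor
`Y` splits off and the cube is read off directly. Conversely every `ℓ³m` has `I = J = 0` and
Hessian `-9 δ² ℓ⁴`, where `δ` is the determinant of `ℓ, m`, so `H_Q ≢ 0` says exactly that
`ℓ` and `m` are not proportional.
-/

/-- The real binary quartic `Q(X,Y) = aX⁴ + bX³Y + cX²Y² + dXY³ + eY⁴` as a
function of two real variables. -/
def Qf (a b c d e : ℝ) : ℝ → ℝ → ℝ := fun X Y =>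
  a * X ^ 4 + b * X ^ 3 * Y + c * X ^ 2 * Y ^ 2 + d * X * Y ^ 3 + e * Y ^ 4

/-- The Hessian covariant `H_Q = Q_XX·Q_YY − (Q_XY)²` of the binary quartic. -/
noncomputable def HessQ (a b c d e : ℝ) (X Y : ℝ) : ℝ :=
  deriv (fun x => deriv (fun x' => Qf a b c d e x' Y) x) X *
    deriv (fun y => deriv (fun y' => Qf a b c d e X y') y) Y -
  (deriv (fun y => deriv (fun x => Qf a b c d e x y) X) Y) ^ 2

theorem HessQ_eq (a b c d e X Y : ℝ) :
    HessQ a b c d e X Y =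
      (24 * a * c - 9 * b ^ 2) * X ^ 4 + (72 * a * d - 12 * b * c) * X ^ 3 * Y +
        (144 * a * e + 18 * b * d - 12 * c ^ 2) * X ^ 2 * Y ^ 2 +
        (72 * b * e - 12 * c * d) * X * Y ^ 3 + (24 * c * e - 9 * d ^ 2) * Y ^ 4 := by
  simp (disch := fun_prop) only [HessQ, Qf, deriv_fun_add, deriv_const_mul_field',
    deriv_mul_const_field', deriv_pow_field, deriv_const, deriv_const_mul_id']
  ring

theorem coeffs_eq_of_Qf_eq {a b c d e a' b' c' d' e' : ℝ}
    (h : ∀ X Y, Qf a b c d e X Y = Qf a' b' c' d' e' X Y) :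
    a = a' ∧ b = b' ∧ c = c' ∧ d = d' ∧ e = e' := by
  simp only [Qf] at h
  refine ⟨?_, ?_, ?_, ?_, ?_⟩
  · linear_combination h 1 0
  · linear_combination (-2) * h 1 0 + (1 / 2) * h 0 1 - (1 / 2) * h 1 1 - (1 / 6) * h 1 (-1)
      + (1 / 6) * h 2 1
  · linear_combination -h 1 0 - h 0 1 + (1 / 2) * h 1 1 + (1 / 2) * h 1 (-1)
  · linear_combination 2 * h 1 0 - (1 / 2) * h 0 1 + h 1 1 - (1 / 3) * h 1 (-1)
      - (1 / 6) * h 2 1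
  · linear_combination h 0 1

theorem cube_mul_eq_Qf (p q p' q' X Y : ℝ) :
    (p * X + q * Y) ^ 3 * (p' * X + q' * Y) =
      Qf (p ^ 3 * p') (3 * p ^ 2 * q * p' + p ^ 3 * q') (3 * p * q ^ 2 * p' + 3 * p ^ 2 * q * q')
        (q ^ 3 * p' + 3 * p * q ^ 2 * q') (q ^ 3 * q') X Y := by
  simp only [Qf]; ring

section CubeMul

variable {a b c d e p q p' q' : ℝ}

theorem coeffs_of_eq_cube_mul
    (h : ∀ X Y, Qf a b c d e X Y = (p * X + q * Y) ^ 3 * (p' * X + q' * Y)) :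
    a = p ^ 3 * p' ∧ b = 3 * p ^ 2 * q * p' + p ^ 3 * q' ∧
      c = 3 * p * q ^ 2 * p' + 3 * p ^ 2 * q * q' ∧ d = q ^ 3 * p' + 3 * p * q ^ 2 * q' ∧
      e = q ^ 3 * q' :=
  coeffs_eq_of_Qf_eq fun X Y => (h X Y).trans (cube_mul_eq_Qf p q p' q' X Y)

theorem Iinv_Jinv_eq_zero_of_eq_cube_mul
    (h : ∀ X Y, Qf a b c d e X Y = (p * X + q * Y) ^ 3 * (p' * X + q' * Y)) :
    Iinv a b c d e = 0 ∧ Jinv a b c d e = 0 := by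
  obtain ⟨rfl, rfl, rfl, rfl, rfl⟩ := coeffs_of_eq_cube_mul h
  constructor <;> (simp only [Iinv, Jinv]; ring)

theorem HessQ_of_eq_cube_mul
    (h : ∀ X Y, Qf a b c d e X Y = (p * X + q * Y) ^ 3 * (p' * X + q' * Y)) (X Y : ℝ) :
    HessQ a b c d e X Y = -9 * (p * q' - q * p') ^ 2 * (p * X + q * Y) ^ 4 := by
  obtain ⟨rfl, rfl, rfl, rfl, rfl⟩ := coeffs_of_eq_cube_mul h
  rw [HessQ_eq]; ring

end CubeMul

theorem Qf_shift (a b c d e t X Y : ℝ) :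
    Qf a b c d e (X + t * Y) Y =
      Qf a (4 * a * t + b) (6 * a * t ^ 2 + 3 * b * t + c)
        (4 * a * t ^ 3 + 3 * b * t ^ 2 + 2 * c * t + d)
        (a * t ^ 4 + b * t ^ 3 + c * t ^ 2 + d * t + e) X Y := by
  simp only [Qf]; ring

theorem Iinv_shift (a b c d e t : ℝ) :
    Iinv a (4 * a * t + b) (6 * a * t ^ 2 + 3 * b * t + c)
        (4 * a * t ^ 3 + 3 * b * t ^ 2 + 2 * c * t + d)
        (a * t ^ 4 + b * t ^ 3 + c * t ^ 2 + d * t + e) = Iinv a b c d e := by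
  simp only [Iinv]; ring

theorem Jinv_shift (a b c d e t : ℝ) :
    Jinv a (4 * a * t + b) (6 * a * t ^ 2 + 3 * b * t + c)
        (4 * a * t ^ 3 + 3 * b * t ^ 2 + 2 * c * t + d)
        (a * t ^ 4 + b * t ^ 3 + c * t ^ 2 + d * t + e) = Jinv a b c d e := by
  simp only [Jinv]; ring

/-- A depressed quartic has root sum zero, so a triple root `ρ` comes with the simple root `-3ρ`. -/
theorem exists_cube_mul_of_depressed {a c d e : ℝ} (ha : a ≠ 0) (hI : Iinv a 0 c d e = 0)
    (hJ : Jinv a 0 c d e = 0) :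
    ∃ ρ, ∀ X Y, Qf a 0 c d e X Y = (X - ρ * Y) ^ 3 * (a * X + 3 * a * ρ * Y) := by
  simp only [Iinv, Jinv] at hI hJ
  have hcd : 8 * c ^ 3 + 27 * a * d ^ 2 = 0 := by linear_combination 6 * c * hI - hJ
  rcases eq_or_ne c 0 with rfl | hc
  · have hd : d = 0 := by simpa [ha] using hcd
    have he : e = 0 := by simpa [ha] using hI
    exact ⟨0, fun X Y => by simp only [Qf, hd, he]; ring⟩
  · set ρ := -3 * d / (4 * c) with hρ
    have hc' : c = -6 * a * ρ ^ 2 := by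
      rw [hρ]; field_simp; linear_combination 2 * hcd
    have hd' : d = 8 * a * ρ ^ 3 := by
      rw [hρ]; field_simp; linear_combination 8 * d * hcd
    have he' : e = -3 * a * ρ ^ 4 := by
      rw [hρ]; field_simp
      linear_combination (32 * c * e + 9 * d ^ 2) * hcd - 72 * c * d ^ 2 * hI
    exact ⟨ρ, fun X Y => by
      simp only [Qf]; linear_combination X ^ 2 * Y ^ 2 * hc' + X * Y ^ 3 * hd' + Y ^ 4 * he'⟩

theorem exists_cube_mul_of_Iinv_Jinv_eq_zero {a b c d e : ℝ} (hI : Iinv a b c d e = 0)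
    (hJ : Jinv a b c d e = 0) :
    ∃ p q p' q', ∀ X Y, Qf a b c d e X Y = (p * X + q * Y) ^ 3 * (p' * X + q' * Y) := by
  rcases eq_or_ne a 0 with rfl | ha
  · simp only [Iinv, Jinv] at hI hJ
    rcases eq_or_ne b 0 with rfl | hb
    · have hc : c = 0 := by simpa using hI
      exact ⟨0, 1, d, e, fun X Y => by simp only [Qf, hc]; ring⟩
    · have hd : d = c ^ 2 / (3 * b) := by field_simp; linear_combination -hI
      have he : e = c ^ 3 / (27 * b ^ 2) := by
        field_simp; linear_combination -hJ - 3 * c * hI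
      exact ⟨3 * b, c, 0, 1 / (27 * b ^ 2), fun X Y => by
        simp only [Qf, hd, he]; field_simp; ring⟩
  · set t := -b / (4 * a) with ht
    have hb : 4 * a * t + b = 0 := by rw [ht]; field_simp; ring
    have hI' := (Iinv_shift a b c d e t).trans hI
    have hJ' := (Jinv_shift a b c d e t).trans hJ
    rw [hb] at hI' hJ'
    obtain ⟨ρ, hρ⟩ := exists_cube_mul_of_depressed ha hI' hJ'
    refine ⟨1, -(t + ρ), a, a * (3 * ρ - t), fun X Y => ?_⟩
    have := hρ (X - t * Y) Y
    rw [← hb, ← Qf_shift, sub_add_cancel] at this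
    rw [this]; ring

theorem I_J_zero_hessian_nonzero_iff_triple_root_general
    (a b c d e : ℝ) :
    (Iinv a b c d e = 0 ∧ Jinv a b c d e = 0 ∧
      ¬ ∀ X Y : ℝ, HessQ a b c d e X Y = 0) ↔
    ∃ c0 p q p' q' : ℝ, c0 ≠ 0 ∧ (p, q) ≠ (0, 0) ∧ (p', q') ≠ (0, 0) ∧
      p * q' - q * p' ≠ 0 ∧
      ∀ X Y : ℝ, Qf a b c d e X Y =
        c0 * (p * X + q * Y) ^ 3 * (p' * X + q' * Y) := by
  constructor
  · rintro ⟨hI, hJ, hH⟩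
    obtain ⟨p, q, p', q', h⟩ := exists_cube_mul_of_Iinv_Jinv_eq_zero hI hJ
    have hδ : p * q' - q * p' ≠ 0 := fun hδ =>
      hH fun X Y => by rw [HessQ_of_eq_cube_mul h, hδ]; ring
    refine ⟨1, p, q, p', q', one_ne_zero, ?_, ?_, hδ, fun X Y => by rw [h, one_mul]⟩ <;>
      exact fun h0 => hδ (by obtain ⟨rfl, rfl⟩ := Prod.mk.inj h0; ring)
  · rintro ⟨c0, p, q, p', q', hc0, -, -, hδ, h⟩
    have h' : ∀ X Y, Qf a b c d e X Y = (p * X + q * Y) ^ 3 * (c0 * p' * X + c0 * q' * Y) :=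
      fun X Y => by rw [h]; ring
    obtain ⟨hI, hJ⟩ := Iinv_Jinv_eq_zero_of_eq_cube_mul h'
    refine ⟨hI, hJ, fun hH => ?_⟩
    have hℓ : p * p + q * q ≠ 0 := fun h0 => hδ (by
      obtain ⟨rfl, rfl⟩ := mul_self_add_mul_self_eq_zero.mp h0; ring)
    have hHpq : -9 * c0 ^ 2 * (p * q' - q * p') ^ 2 * (p * p + q * q) ^ 4 = 0 := by
      linear_combination (HessQ_of_eq_cube_mul h' p q).symm.trans (hH p q)
    simp [hc0, hδ, hℓ] at hHpq

/-- For a nonzero real binary quartic `Q`: `I(Q) = 0`, `J(Q) = 0` and `H_Q ≢ 0`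
iff `Q = c·ℓ³·m` with `c ≠ 0` and non-proportional nonzero real linear forms
`ℓ`, `m` (one triple real root and a distinct simple real root). -/
theorem I_J_zero_hessian_nonzero_iff_triple_root
    (a b c d e : ℝ) (hQ : ¬(a = 0 ∧ b = 0 ∧ c = 0 ∧ d = 0 ∧ e = 0)) :
    (Iinv a b c d e = 0 ∧ Jinv a b c d e = 0 ∧
      ¬ ∀ X Y : ℝ, HessQ a b c d e X Y = 0) ↔
    ∃ c0 p q p' q' : ℝ, c0 ≠ 0 ∧ (p, q) ≠ (0, 0) ∧ (p', q') ≠ (0, 0) ∧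
      p * q' - q * p' ≠ 0 ∧
      ∀ X Y : ℝ, Qf a b c d e X Y =
        c0 * (p * X + q * Y) ^ 3 * (p' * X + q' * Y) :=
  I_J_zero_hessian_nonzero_iff_triple_root_general a b c d e
end
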